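/- There is a constant C depending only on n, λ and Lip_A such that for every z ∈ ℝ^{n+1} \ {0} at which A is differentiable, the vector field β(z) = A(z)z/μ(z) is differentiable at z and its total derivative satisfies ‖Dβ(z) − Id‖ ≤ C‖z‖ in operator norm; in particular this bound holds at almost every z ∈ ℝ^{n+1}. -/

import Mathlib

open scoped InnerProductSpace

set_option maxHeartbeats 1000000 in
/-- Let `A` be Lipschitz, uniformly elliptic and with `A(0) = Id`, and set
`μ(z) = ⟨A(z)z, z⟩/‖z‖²`, `β(z) = A(z)z/μ(z)`.  There is a constant `C` depending only on
`n`, `λ`, `Lip_A` such that at every `z ≠ 0` where `A` is differentiable, `β` is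
differentiable and `‖Dβ(z) − Id‖ ≤ C‖z‖` in operator norm; in particular this holds at
almost every `z`. -/
theorem beta_derivative_close_to_id (n : ℕ) (hn : 1 ≤ n) (lam : ℝ) (hlam0 : 0 < lam)
    (hlam1 : lam ≤ 1) (LipA : ℝ) (hLipA : 0 ≤ LipA)
    (A : EuclideanSpace ℝ (Fin (n + 1)) →
      (EuclideanSpace ℝ (Fin (n + 1)) →L[ℝ] EuclideanSpace ℝ (Fin (n + 1))))
    (hLip : LipschitzWith (Real.toNNReal LipA) A)
    (hell₁ : ∀ z v, lam * ‖v‖ ^ 2 ≤ ⟪A z v, v⟫_ℝ)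
    (hell₂ : ∀ z v, ‖A z v‖ ≤ lam⁻¹ * ‖v‖)
    (hA0 : A 0 = ContinuousLinearMap.id ℝ (EuclideanSpace ℝ (Fin (n + 1)))) :
    ∃ C : ℝ, 0 < C ∧
      ((∀ z : EuclideanSpace ℝ (Fin (n + 1)), z ≠ 0 → DifferentiableAt ℝ A z →
        DifferentiableAt ℝ (fun z => (⟪A z z, z⟫_ℝ / ‖z‖ ^ 2)⁻¹ • A z z) z ∧
        ‖fderiv ℝ (fun z => (⟪A z z, z⟫_ℝ / ‖z‖ ^ 2)⁻¹ • A z z) z -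
          ContinuousLinearMap.id ℝ (EuclideanSpace ℝ (Fin (n + 1)))‖ ≤ C * ‖z‖) ∧
      (∀ᵐ z ∂(MeasureTheory.volume),
        DifferentiableAt ℝ (fun z => (⟪A z z, z⟫_ℝ / ‖z‖ ^ 2)⁻¹ • A z z) z ∧
        ‖fderiv ℝ (fun z => (⟪A z z, z⟫_ℝ / ‖z‖ ^ 2)⁻¹ • A z z) z -
          ContinuousLinearMap.id ℝ (EuclideanSpace ℝ (Fin (n + 1)))‖ ≤ C * ‖z‖)) := by
  set E := EuclideanSpace ℝ (Fin (n + 1)) with hE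
  set C : ℝ := 8 * (lam⁻¹)^3 * (LipA + 1) with hCdef
  have hlaminv : (1:ℝ) ≤ lam⁻¹ := (one_le_inv_iff₀).2 ⟨hlam0, hlam1⟩
  have hlaminv0 : (0:ℝ) < lam⁻¹ := inv_pos.2 hlam0
  have hCpos : 0 < C := by positivity
  have key : ∀ z : E, z ≠ 0 → DifferentiableAt ℝ A z →
      DifferentiableAt ℝ (fun z => (⟪A z z, z⟫_ℝ / ‖z‖ ^ 2)⁻¹ • A z z) z ∧
      ‖fderiv ℝ (fun z => (⟪A z z, z⟫_ℝ / ‖z‖ ^ 2)⁻¹ • A z z) z -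
        ContinuousLinearMap.id ℝ E‖ ≤ C * ‖z‖ := by
    intro z hz hAz
    have hr : (0:ℝ) < ‖z‖ := norm_pos_iff.2 hz
    have hr2 : (0:ℝ) < ‖z‖^2 := by positivity
    set a : ℝ := ⟪A z z, z⟫_ℝ with ha
    set μ : ℝ := a / ‖z‖^2 with hμdef
    have hμlam : lam ≤ μ := (le_div_iff₀ hr2).2 (by simpa using hell₁ z z)
    have hμ0 : 0 < μ := lt_of_lt_of_le hlam0 hμlam
    have hμup : μ ≤ lam⁻¹ := by
      rw [div_le_iff₀ hr2]
      calc a ≤ ‖A z z‖ * ‖z‖ := real_inner_le_norm _ _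
        _ ≤ (lam⁻¹ * ‖z‖) * ‖z‖ := by
            have := hell₂ z z; nlinarith [norm_nonneg z]
        _ = lam⁻¹ * ‖z‖^2 := by ring
    -- Lipschitz bounds
    have hAzid : ‖A z - ContinuousLinearMap.id ℝ E‖ ≤ LipA * ‖z‖ := by
      have h := hLip.dist_le_mul z 0
      rw [Real.coe_toNNReal LipA hLipA] at h
      simpa [hA0, dist_eq_norm] using h
    have hB1 : ∀ v : E, ‖A z v - v‖ ≤ LipA * ‖z‖ * ‖v‖ := by
      intro v
      have : A z v - v = (A z - ContinuousLinearMap.id ℝ E) v := by simp; rfl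
      rw [this]
      exact le_trans ((A z - ContinuousLinearMap.id ℝ E).le_opNorm v)
        (mul_le_mul_of_nonneg_right hAzid (norm_nonneg v))
    have hA'norm : ‖fderiv ℝ A z‖ ≤ LipA := by
      have := norm_fderiv_le_of_lipschitz ℝ hLip (x₀ := z)
      rwa [Real.coe_toNNReal LipA hLipA] at this
    have hB2 : ∀ w : E, ‖fderiv ℝ A z w z‖ ≤ LipA * ‖w‖ * ‖z‖ := by
      intro w
      calc ‖fderiv ℝ A z w z‖ ≤ ‖fderiv ℝ A z w‖ * ‖z‖ := (fderiv ℝ A z w).le_opNorm z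
        _ ≤ (‖fderiv ℝ A z‖ * ‖w‖) * ‖z‖ := by
            apply mul_le_mul_of_nonneg_right ((fderiv ℝ A z).le_opNorm w) (norm_nonneg z)
        _ ≤ LipA * ‖w‖ * ‖z‖ := by
            apply mul_le_mul_of_nonneg_right
              (mul_le_mul_of_nonneg_right hA'norm (norm_nonneg w)) (norm_nonneg z)
    have hgz : ‖A z z - z‖ ≤ LipA * ‖z‖ * ‖z‖ := hB1 z
    have hgnorm : ‖A z z‖ ≤ lam⁻¹ * ‖z‖ := hell₂ z z
    have hμ1 : |μ - 1| ≤ LipA * ‖z‖ := by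
      have hnum : μ - 1 = ⟪A z z - z, z⟫_ℝ / ‖z‖^2 := by
        rw [inner_sub_left, real_inner_self_eq_norm_sq, hμdef, sub_div,
          div_self (ne_of_gt hr2)]
      rw [hnum, abs_div, abs_of_pos hr2, div_le_iff₀ hr2]
      calc |⟪A z z - z, z⟫_ℝ| ≤ ‖A z z - z‖ * ‖z‖ := abs_real_inner_le_norm _ _
        _ ≤ (LipA * ‖z‖ * ‖z‖) * ‖z‖ := mul_le_mul_of_nonneg_right hgz (norm_nonneg z)
        _ = LipA * ‖z‖ * ‖z‖^2 := by ring
    -- derivative construction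
    set G : E →L[ℝ] E := (A z).comp (ContinuousLinearMap.id ℝ E)
      + (fderiv ℝ A z).flip z with hG
    have hgd : HasFDerivAt (fun y : E => A y y) G z :=
      hAz.hasFDerivAt.clm_apply (hasFDerivAt_id z)
    set H : E →L[ℝ] ℝ := (fderivInnerCLM ℝ (A z z, z)).comp
      (G.prod (ContinuousLinearMap.id ℝ E)) with hH
    have hhd : HasFDerivAt (fun y : E => ⟪A y y, y⟫_ℝ) H z :=
      hgd.inner ℝ (hasFDerivAt_id z)
    set Nd : E →L[ℝ] ℝ := 2 • (innerSL ℝ z).comp (ContinuousLinearMap.id ℝ E) with hNd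
    have hNdd : HasFDerivAt (fun y : E => ‖y‖^2) Nd z := (hasFDerivAt_id z).norm_sq
    set Ninv : E →L[ℝ] ℝ :=
      (ContinuousLinearMap.smulRight (1 : ℝ →L[ℝ] ℝ) (-((‖z‖^2)^2)⁻¹)).comp Nd with hNinv
    have hNinvd : HasFDerivAt (fun y : E => (‖y‖^2)⁻¹) Ninv z :=
      (hasFDerivAt_inv (ne_of_gt hr2)).comp z hNdd
    set S : E →L[ℝ] ℝ := a • Ninv + (‖z‖^2)⁻¹ • H with hS
    have hsd : HasFDerivAt (fun y : E => ⟪A y y, y⟫_ℝ / ‖y‖^2) S z := by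
      simp only [div_eq_mul_inv]
      exact hhd.mul hNinvd
    set Cd : E →L[ℝ] ℝ :=
      (ContinuousLinearMap.smulRight (1 : ℝ →L[ℝ] ℝ) (-(μ^2)⁻¹)).comp S with hCd
    have hcd : HasFDerivAt (fun y : E => (⟪A y y, y⟫_ℝ / ‖y‖^2)⁻¹) Cd z :=
      (hasFDerivAt_inv (ne_of_gt hμ0)).comp z hsd
    set D : E →L[ℝ] E := μ⁻¹ • G + Cd.smulRight (A z z) with hD
    have hβ : HasFDerivAt (fun y : E => (⟪A y y, y⟫_ℝ / ‖y‖^2)⁻¹ • A y y) D z :=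
      hcd.smul hgd
    refine ⟨hβ.differentiableAt, ?_⟩
    rw [hβ.fderiv]
    -- bound on S
    have hSbound : ∀ w : E, |S w| ≤ 5 * LipA * ‖w‖ := by
      intro w
      have hSw : S w = (⟪A z z - z, w⟫_ℝ + ⟪A z w - w, z⟫_ℝ + ⟪fderiv ℝ A z w z, z⟫_ℝ
          + (2 - 2*μ) * ⟪z, w⟫_ℝ) / ‖z‖^2 := by
        have h1 : S w = a * ((2 * ⟪z, w⟫_ℝ) * (-((‖z‖^2)^2)⁻¹))
            + (‖z‖^2)⁻¹ * (⟪A z z, w⟫_ℝ + (⟪A z w, z⟫_ℝ + ⟪fderiv ℝ A z w z, z⟫_ℝ)) := by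
          simp only [hS, hNinv, hNd, hH, hG, ContinuousLinearMap.add_apply,
            ContinuousLinearMap.smul_apply, ContinuousLinearMap.comp_apply,
            ContinuousLinearMap.smulRight_apply, ContinuousLinearMap.one_apply,
            ContinuousLinearMap.prod_apply, fderivInnerCLM_apply,
            ContinuousLinearMap.flip_apply, ContinuousLinearMap.id_apply,
            ContinuousLinearMap.coe_id', id_eq, smul_eq_mul, innerSL_apply_apply,
            nsmul_eq_mul, Nat.cast_ofNat, inner_add_left]
        have scalar : ∀ p q t u N aa : ℝ, 0 < N →
            aa * ((2 * u) * (-(N^2)⁻¹)) + N⁻¹ * (p + (q + t))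
              = (p - u + (q - u) + t + (2 - 2*(aa/N)) * u) / N := by
          intro p q t u N aa hN
          field_simp
          ring
        rw [h1, inner_sub_left, inner_sub_left, real_inner_comm w z, hμdef]
        exact scalar ⟪A z z, w⟫_ℝ ⟪A z w, z⟫_ℝ ⟪fderiv ℝ A z w z, z⟫_ℝ ⟪w, z⟫_ℝ
          (‖z‖^2) a hr2
      rw [hSw, abs_div, abs_of_pos hr2, div_le_iff₀ hr2]
      have e1 : |⟪A z z - z, w⟫_ℝ| ≤ (LipA * ‖z‖ * ‖z‖) * ‖w‖ :=
        le_trans (abs_real_inner_le_norm _ _) (mul_le_mul_of_nonneg_right hgz (norm_nonneg w))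
      have e2 : |⟪A z w - w, z⟫_ℝ| ≤ (LipA * ‖z‖ * ‖w‖) * ‖z‖ :=
        le_trans (abs_real_inner_le_norm _ _)
          (mul_le_mul_of_nonneg_right (hB1 w) (norm_nonneg z))
      have e3 : |⟪fderiv ℝ A z w z, z⟫_ℝ| ≤ (LipA * ‖w‖ * ‖z‖) * ‖z‖ :=
        le_trans (abs_real_inner_le_norm _ _)
          (mul_le_mul_of_nonneg_right (hB2 w) (norm_nonneg z))
      have e4 : |(2 - 2*μ) * ⟪z, w⟫_ℝ| ≤ (2 * (LipA * ‖z‖)) * (‖z‖ * ‖w‖) := by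
        rw [abs_mul]
        apply mul_le_mul _ (abs_real_inner_le_norm z w) (abs_nonneg _) (by positivity)
        have : |2 - 2*μ| = 2 * |μ - 1| := by
          rw [show (2:ℝ) - 2*μ = -(2*(μ-1)) by ring, abs_neg, abs_mul, abs_two]
        rw [this]
        linarith [hμ1]
      calc |⟪A z z - z, w⟫_ℝ + ⟪A z w - w, z⟫_ℝ + ⟪fderiv ℝ A z w z, z⟫_ℝ
            + (2 - 2*μ) * ⟪z, w⟫_ℝ|
          ≤ |⟪A z z - z, w⟫_ℝ| + |⟪A z w - w, z⟫_ℝ| + |⟪fderiv ℝ A z w z, z⟫_ℝ|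
            + |(2 - 2*μ) * ⟪z, w⟫_ℝ| := by
            have h1 := abs_add_le (⟪A z z - z, w⟫_ℝ + ⟪A z w - w, z⟫_ℝ
              + ⟪fderiv ℝ A z w z, z⟫_ℝ) ((2 - 2*μ) * ⟪z, w⟫_ℝ)
            have h2 := abs_add_le (⟪A z z - z, w⟫_ℝ + ⟪A z w - w, z⟫_ℝ)
              (⟪fderiv ℝ A z w z, z⟫_ℝ)
            have h3 := abs_add_le (⟪A z z - z, w⟫_ℝ) (⟪A z w - w, z⟫_ℝ)
            linarith
        _ ≤ (LipA * ‖z‖ * ‖z‖) * ‖w‖ + (LipA * ‖z‖ * ‖w‖) * ‖z‖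
            + (LipA * ‖w‖ * ‖z‖) * ‖z‖ + (2 * (LipA * ‖z‖)) * (‖z‖ * ‖w‖) := by
            linarith [e1, e2, e3, e4]
        _ = 5 * LipA * ‖w‖ * ‖z‖^2 := by ring
    -- final operator norm bound
    apply ContinuousLinearMap.opNorm_le_bound _ (by positivity)
    intro w
    have hDw : (D - ContinuousLinearMap.id ℝ E) w
        = μ⁻¹ • ((A z w - w) + fderiv ℝ A z w z) + (μ⁻¹ - 1) • w
          + (S w * (-(μ^2)⁻¹)) • A z z := by
      simp only [ContinuousLinearMap.sub_apply, ContinuousLinearMap.coe_id', id_eq, hD,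
        ContinuousLinearMap.add_apply, ContinuousLinearMap.smul_apply,
        ContinuousLinearMap.smulRight_apply, hCd, ContinuousLinearMap.comp_apply,
        ContinuousLinearMap.one_apply, hG, ContinuousLinearMap.flip_apply,
        ContinuousLinearMap.id_apply, smul_eq_mul]
      module
    rw [hDw]
    have hμinv : μ⁻¹ ≤ lam⁻¹ := by
      apply inv_anti₀ hlam0 hμlam
    have hμinv0 : 0 < μ⁻¹ := inv_pos.2 hμ0
    have hμsqinv : (μ^2)⁻¹ ≤ lam⁻¹ * lam⁻¹ := by
      rw [show lam⁻¹ * lam⁻¹ = (lam^2)⁻¹ by rw [sq]; rw [mul_inv]]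
      apply inv_anti₀ (by positivity)
      nlinarith
    have hμinv1 : |μ⁻¹ - 1| ≤ lam⁻¹ * (LipA * ‖z‖) := by
      have : μ⁻¹ - 1 = (1 - μ) * μ⁻¹ := by field_simp
      rw [this, abs_mul, abs_of_pos hμinv0]
      have h1 : |1 - μ| ≤ LipA * ‖z‖ := by rw [abs_sub_comm]; exact hμ1
      calc |1 - μ| * μ⁻¹ ≤ (LipA * ‖z‖) * lam⁻¹ :=
            mul_le_mul h1 hμinv (le_of_lt hμinv0) (by positivity)
        _ = lam⁻¹ * (LipA * ‖z‖) := by ring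
    have t1 : ‖μ⁻¹ • ((A z w - w) + fderiv ℝ A z w z)‖
        ≤ lam⁻¹ * (2 * LipA * ‖z‖ * ‖w‖) := by
      rw [norm_smul, Real.norm_eq_abs, abs_of_pos hμinv0]
      have h1 : ‖(A z w - w) + fderiv ℝ A z w z‖ ≤ 2 * LipA * ‖z‖ * ‖w‖ := by
        calc ‖(A z w - w) + fderiv ℝ A z w z‖ ≤ ‖A z w - w‖ + ‖fderiv ℝ A z w z‖ :=
              norm_add_le _ _
          _ ≤ LipA * ‖z‖ * ‖w‖ + LipA * ‖w‖ * ‖z‖ := add_le_add (hB1 w) (hB2 w)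
          _ = 2 * LipA * ‖z‖ * ‖w‖ := by ring
      exact mul_le_mul hμinv h1 (norm_nonneg _) (by positivity)
    have t2 : ‖(μ⁻¹ - 1) • w‖ ≤ lam⁻¹ * (LipA * ‖z‖) * ‖w‖ := by
      rw [norm_smul, Real.norm_eq_abs]
      exact mul_le_mul_of_nonneg_right hμinv1 (norm_nonneg w)
    have t3 : ‖(S w * (-(μ^2)⁻¹)) • A z z‖
        ≤ (5 * LipA * ‖w‖) * (lam⁻¹ * lam⁻¹) * (lam⁻¹ * ‖z‖) := by
      rw [norm_smul, Real.norm_eq_abs, abs_mul, abs_neg, abs_inv, abs_of_pos (by positivity :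
        (0:ℝ) < μ^2)]
      apply mul_le_mul _ hgnorm (norm_nonneg _) (by positivity)
      exact mul_le_mul (hSbound w) hμsqinv (by positivity) (by positivity)
    calc ‖μ⁻¹ • ((A z w - w) + fderiv ℝ A z w z) + (μ⁻¹ - 1) • w
          + (S w * (-(μ^2)⁻¹)) • A z z‖
        ≤ ‖μ⁻¹ • ((A z w - w) + fderiv ℝ A z w z)‖ + ‖(μ⁻¹ - 1) • w‖
          + ‖(S w * (-(μ^2)⁻¹)) • A z z‖ := by
          have h1 := norm_add_le (μ⁻¹ • ((A z w - w) + fderiv ℝ A z w z) + (μ⁻¹ - 1) • w)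
            ((S w * (-(μ^2)⁻¹)) • A z z)
          have h2 := norm_add_le (μ⁻¹ • ((A z w - w) + fderiv ℝ A z w z)) ((μ⁻¹ - 1) • w)
          linarith
      _ ≤ lam⁻¹ * (2 * LipA * ‖z‖ * ‖w‖) + lam⁻¹ * (LipA * ‖z‖) * ‖w‖
          + (5 * LipA * ‖w‖) * (lam⁻¹ * lam⁻¹) * (lam⁻¹ * ‖z‖) := by linarith [t1, t2, t3]
      _ = (3 * lam⁻¹ + 5 * lam⁻¹^3) * LipA * (‖z‖ * ‖w‖) := by ring
      _ ≤ (8 * lam⁻¹^3) * (LipA + 1) * (‖z‖ * ‖w‖) := by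
          have h3 : lam⁻¹ ≤ lam⁻¹^3 := le_self_pow₀ hlaminv (by norm_num)
          have h4 : (3 * lam⁻¹ + 5 * lam⁻¹^3) ≤ 8 * lam⁻¹^3 := by linarith
          have h5 : LipA ≤ LipA + 1 := by linarith
          apply mul_le_mul (mul_le_mul h4 h5 hLipA (by positivity)) le_rfl
            (mul_nonneg (norm_nonneg z) (norm_nonneg w)) (by positivity)
      _ = C * ‖z‖ * ‖w‖ := by rw [hCdef]; ring
  refine ⟨C, hCpos, fun z hz hAz => key z hz hAz, ?_⟩
  have hne : ∀ᵐ z : E ∂(MeasureTheory.volume), z ≠ 0 := by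
    rw [MeasureTheory.ae_iff]
    have : {z : E | ¬ z ≠ 0} = {(0 : E)} := by ext x; simp
    rw [this]
    simp
  filter_upwards [hLip.ae_differentiableAt, hne] with z h1 h2
  exact key z h2 h1
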